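/- Let c > 1, 1 < μ < c, ν > 0, and let g_{μ,ν} be the inner product on 𝔤_c whose matrix in the basis e₀, e₁, e₂ is [[1, 1, 0], [1, μ, 0], [0, 0, ν]], with Ricci form Ric. Then the only endomorphism of 𝔤_c that is skew-symmetric with respect to both g_{μ,ν} and Ric is 0. (Hence for 1 < μ < c the full isometry group of (G_c, g_{μ,ν}) is G_c itself.) -/

import Mathlib

/-! Both `g_{μ,ν}` and, by a direct computation with its Levi-Civita product (forced by the Koszul
formula), `2 (μ - 1) ν · Ric` are block diagonal for `span {e₀, e₁} ⊕ ℝ e₂`. On `span {e₀, e₁}` the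
`g`-skew endomorphisms form a line, whose generator is also `Ric`-skew only if the two forms are
proportional there; they are not, as `(μ - 1)(c - μ) ≠ 0`. The entries of a common skew endomorphism
mixing the two blocks solve a linear system of determinant `-c (c - μ)² (μ - 1)² ≠ 0`. -/

noncomputable section

open scoped BigOperators

/-- The underlying space of the 3-dimensional Lie algebras under consideration. -/
abbrev V3 : Type := Fin 3 → ℝ

/-- The standard basis `e₀, e₁, e₂`. -/
def e3 (i : Fin 3) : V3 := Pi.single i 1

/-- The bracket of the Lie algebra `𝔤_c`:
`[e₀,e₁] = 0`, `[e₂,e₀] = e₁`, `[e₂,e₁] = −c e₀ + 2 e₁`, extended bilinearly. -/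
def braC (c : ℝ) (x y : V3) : V3 :=
  ![-c * (x 2 * y 1 - y 2 * x 1),
    (x 2 * y 0 - y 2 * x 0) + 2 * (x 2 * y 1 - y 2 * x 1),
    0]

/-- The inner product on `𝔤_c`, `c > 1`, with matrix `[[1,1,0],[1,μ,0],[0,0,ν]]`
in the basis `e₀,e₁,e₂`. -/
def gT (μ ν : ℝ) (x y : V3) : ℝ :=
  x 0 * y 0 + (x 0 * y 1 + x 1 * y 0) + μ * (x 1 * y 1) + ν * (x 2 * y 2)

/-- The curvature tensor `R(X,Y)Z = ∇_X ∇_Y Z − ∇_Y ∇_X Z − ∇_{[X,Y]} Z`. -/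
def Rc (br nab : V3 → V3 → V3) (X Y Z : V3) : V3 :=
  nab X (nab Y Z) - nab Y (nab X Z) - nab (br X Y) Z

/-- The Ricci form `Ric(X,Y) = tr (Z ↦ R(Z,X)Y)`. -/
def RicF (br nab : V3 → V3 → V3) (X Y : V3) : ℝ :=
  ∑ k : Fin 3, Rc br nab (e3 k) X Y k

lemma e3_zero : e3 0 = ![1, 0, 0] := by ext i; fin_cases i <;> rfl

lemma e3_one : e3 1 = ![0, 1, 0] := by ext i; fin_cases i <;> rfl

lemma e3_two : e3 2 = ![0, 0, 1] := by ext i; fin_cases i <;> rfl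

lemma eq_of_forall_gT_eq {μ ν : ℝ} (hμ : μ ≠ 1) (hν : ν ≠ 0) {w w' : V3}
    (h : ∀ z : V3, gT μ ν w z = gT μ ν w' z) : w = w' := by
  have h₀ := h (e3 0)
  have h₁ := h (e3 1)
  have h₂ := h (e3 2)
  simp only [gT, e3_zero, e3_one, e3_two, Matrix.cons_val_zero, Matrix.cons_val_one,
    Matrix.cons_val] at h₀ h₁ h₂
  have hw₂ : w 2 = w' 2 := by
    refine sub_eq_zero.mp ((mul_eq_zero.mp ?_).resolve_left hν)
    linear_combination h₂
  have hw₁ : w 1 = w' 1 := by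
    refine sub_eq_zero.mp ((mul_eq_zero.mp ?_).resolve_left (sub_ne_zero.mpr hμ))
    linear_combination h₁ - h₀
  have hw₀ : w 0 = w' 0 := by linear_combination h₀ - hw₁
  funext i
  fin_cases i <;> assumption

def leviCivita (c μ ν : ℝ) (x y : V3) : V3 :=
  ![((2 - μ - c) / 2 * (x 0 * y 2 + x 2 * y 0) + (2 * μ - μ ^ 2 - 2 * c + c * μ) / 2 * (x 1 * y 2)
      + (2 * μ - μ ^ 2 - c * μ) / 2 * (x 2 * y 1)) / (μ - 1),
    ((c - μ) / 2 * (x 0 * y 2) + (2 + c - 3 * μ) / 2 * (x 1 * y 2)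
      + (μ + c - 2) / 2 * (x 2 * y 0 + x 2 * y 1)) / (μ - 1),
    ((x 0 * y 0) + (2 + μ - c) / 2 * (x 0 * y 1 + x 1 * y 0) + (2 * μ - c) * (x 1 * y 1)) / ν]

lemma leviCivita_koszul (c : ℝ) {μ ν : ℝ} (hμ : μ ≠ 1) (hν : ν ≠ 0) (x y z : V3) :
    2 * gT μ ν (leviCivita c μ ν x y) z =
      gT μ ν (braC c x y) z - gT μ ν (braC c y z) x + gT μ ν (braC c z x) y := by
  have hμ' : μ - 1 ≠ 0 := sub_ne_zero.mpr hμ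
  simp only [gT, leviCivita, braC, Matrix.cons_val_zero, Matrix.cons_val_one, Matrix.cons_val]
  field_simp
  ring

lemma eq_leviCivita_of_koszul {c μ ν : ℝ} (hμ : μ ≠ 1) (hν : ν ≠ 0) {nab : V3 → V3 → V3}
    (hK : ∀ x y z : V3, 2 * gT μ ν (nab x y) z =
      gT μ ν (braC c x y) z - gT μ ν (braC c y z) x + gT μ ν (braC c z x) y) :
    nab = leviCivita c μ ν := by
  funext x y
  refine eq_of_forall_gT_eq hμ hν fun z => ?_
  linarith [hK x y z, leviCivita_koszul c hμ hν x y z]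

def blockForm (b₀₀ b₀₁ b₁₁ b₂₂ : ℝ) (x y : V3) : ℝ :=
  b₀₀ * (x 0 * y 0) + b₀₁ * (x 0 * y 1 + x 1 * y 0) + b₁₁ * (x 1 * y 1) + b₂₂ * (x 2 * y 2)

lemma gT_eq_blockForm (μ ν : ℝ) : gT μ ν = blockForm 1 1 μ ν := by
  funext x y
  simp only [gT, blockForm]
  ring

def scaledRic (c μ ν : ℝ) : V3 → V3 → ℝ :=
  blockForm (c ^ 2 - 2 * c - μ ^ 2 - 2 * μ + 4) (c ^ 2 + 2 * c * μ - 4 * c - 3 * μ ^ 2 + 4)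
    (μ ^ 3 - 12 * μ ^ 2 + 12 * μ - c ^ 2 * μ + 2 * c ^ 2 + 6 * c * μ - 8 * c)
    (ν * (4 - 4 * μ - (c - μ) ^ 2))

lemma ricF_leviCivita (c : ℝ) {μ ν : ℝ} (hμ : μ ≠ 1) (hν : ν ≠ 0) (x y : V3) :
    RicF (braC c) (leviCivita c μ ν) x y = scaledRic c μ ν x y / (2 * (μ - 1) * ν) := by
  have hμ' : μ - 1 ≠ 0 := sub_ne_zero.mpr hμ
  simp only [RicF, Rc, Fin.sum_univ_three, e3_zero, e3_one, e3_two, leviCivita, braC, scaledRic,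
    blockForm, Pi.sub_apply, Matrix.cons_val_zero, Matrix.cons_val_one, Matrix.cons_val]
  field_simp
  ring

lemma blockForm_skew_coords {b₀₀ b₀₁ b₁₁ b₂₂ : ℝ} {A : Module.End ℝ V3}
    (hA : ∀ x y, blockForm b₀₀ b₀₁ b₁₁ b₂₂ (A x) y + blockForm b₀₀ b₀₁ b₁₁ b₂₂ x (A y) = 0) :
    b₀₀ * A (e3 0) 0 + b₀₁ * A (e3 0) 1 = 0 ∧
    b₀₁ * A (e3 1) 0 + b₁₁ * A (e3 1) 1 = 0 ∧
    b₀₁ * A (e3 0) 0 + b₁₁ * A (e3 0) 1 + b₀₀ * A (e3 1) 0 + b₀₁ * A (e3 1) 1 = 0 ∧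
    b₂₂ * A (e3 0) 2 + b₀₀ * A (e3 2) 0 + b₀₁ * A (e3 2) 1 = 0 ∧
    b₂₂ * A (e3 1) 2 + b₀₁ * A (e3 2) 0 + b₁₁ * A (e3 2) 1 = 0 ∧
    b₂₂ * A (e3 2) 2 = 0 := by
  have h₀₀ := hA (e3 0) (e3 0)
  have h₁₁ := hA (e3 1) (e3 1)
  have h₀₁ := hA (e3 0) (e3 1)
  have h₀₂ := hA (e3 0) (e3 2)
  have h₁₂ := hA (e3 1) (e3 2)
  have h₂₂ := hA (e3 2) (e3 2)
  simp only [blockForm, e3_zero, e3_one, e3_two, Matrix.cons_val_zero, Matrix.cons_val_one,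
    Matrix.cons_val] at h₀₀ h₁₁ h₀₁ h₀₂ h₁₂ h₂₂ ⊢
  refine ⟨?_, ?_, ?_, ?_, ?_, ?_⟩ <;> linarith

lemma eq_zero_of_apply_e3 {A : Module.End ℝ V3} (h : ∀ i j, A (e3 i) j = 0) : A = 0 :=
  (Pi.basisFun ℝ (Fin 3)).ext fun i => funext fun j => by simpa [e3] using h i j

theorem eq_zero_of_skew_gT_of_skew_scaledRic {c μ ν : ℝ} (hc : c ≠ 0) (hμ : μ ≠ 1) (hμc : μ ≠ c)
    (hν : ν ≠ 0) {A : Module.End ℝ V3}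
    (hg : ∀ x y, gT μ ν (A x) y + gT μ ν x (A y) = 0)
    (hr : ∀ x y, scaledRic c μ ν (A x) y + scaledRic c μ ν x (A y) = 0) : A = 0 := by
  rw [gT_eq_blockForm] at hg
  obtain ⟨g₀₀, g₁₁, g₀₁, g₀₂, g₁₂, g₂₂⟩ := blockForm_skew_coords hg
  obtain ⟨r₀₀, -, -, r₀₂, r₁₂, -⟩ := blockForm_skew_coords hr
  set x := A (e3 0)
  set y := A (e3 1)
  set z := A (e3 2)
  have hμ' : μ - 1 ≠ 0 := sub_ne_zero.mpr hμ
  have hcμ : c - μ ≠ 0 := sub_ne_zero.mpr hμc.symm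
  -- `scaledRic` is not proportional to `gT` on `span {e₀, e₁}`
  have hx₁ : x 1 = 0 := by
    refine (mul_eq_zero.mp ?_).resolve_left (mul_ne_zero hμ' hcμ)
    linear_combination (r₀₀ - (c ^ 2 - 2 * c - μ ^ 2 - 2 * μ + 4) * g₀₀) / 2
  have hx₀ : x 0 = 0 := by linear_combination g₀₀ - hx₁
  have hy₁ : y 1 = 0 := by
    refine (mul_eq_zero.mp ?_).resolve_left hμ'
    linear_combination g₁₁ - g₀₁ + hx₀ + μ * hx₁
  have hy₀ : y 0 = 0 := by linear_combination g₁₁ - μ * hy₁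
  -- eliminating `x 2` and `y 2` leaves a `2 × 2` system for `z 0, z 1` of determinant `-c (μ - 1)²`
  have hsys₁ : (c - 1) * z 0 + (c + μ - 2) * z 1 = 0 := by
    refine (mul_eq_zero.mp ?_).resolve_left hcμ
    linear_combination (r₀₂ - (4 - 4 * μ - (c - μ) ^ 2) * g₀₂) / 2
  have hsys₂ : (c + μ - 2) * z 0 + (c - (μ - 2) ^ 2) * z 1 = 0 := by
    refine (mul_eq_zero.mp ?_).resolve_left hcμ
    linear_combination (r₁₂ - (4 - 4 * μ - (c - μ) ^ 2) * g₁₂) / 2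
  have hdet : c * (μ - 1) ^ 2 ≠ 0 := mul_ne_zero hc (pow_ne_zero 2 hμ')
  have hz₀ : z 0 = 0 := by
    refine (mul_eq_zero.mp ?_).resolve_left hdet
    linear_combination (c + μ - 2) * hsys₂ - (c - (μ - 2) ^ 2) * hsys₁
  have hz₁ : z 1 = 0 := by
    refine (mul_eq_zero.mp ?_).resolve_left hdet
    linear_combination (c + μ - 2) * hsys₁ - (c - 1) * hsys₂
  have hx₂ : x 2 = 0 := by
    refine (mul_eq_zero.mp ?_).resolve_left hν
    linear_combination g₀₂ - hz₀ - hz₁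
  have hy₂ : y 2 = 0 := by
    refine (mul_eq_zero.mp ?_).resolve_left hν
    linear_combination g₁₂ - hz₀ - μ * hz₁
  have hz₂ : z 2 = 0 := (mul_eq_zero.mp g₂₂).resolve_left hν
  refine eq_zero_of_apply_e3 fun i j => ?_
  fin_cases i <;> fin_cases j <;> assumption

theorem stmt12_general (c μ ν : ℝ) (hμ1 : 1 < μ) (hμc : μ < c) (hν : 0 < ν)
    (nab : V3 → V3 → V3)
    (hK : ∀ X Y Z : V3, 2 * gT μ ν (nab X Y) Z =
      gT μ ν (braC c X Y) Z - gT μ ν (braC c Y Z) X + gT μ ν (braC c Z X) Y) :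
    ∀ A : Module.End ℝ V3,
      (∀ x y : V3, gT μ ν (A x) y + gT μ ν x (A y) = 0) →
      (∀ x y : V3, RicF (braC c) nab (A x) y + RicF (braC c) nab x (A y) = 0) →
      A = 0 := by
  intro A hg hR
  obtain rfl := eq_leviCivita_of_koszul hμ1.ne' hν.ne' hK
  have hc : c ≠ 0 := (zero_lt_one.trans (hμ1.trans hμc)).ne'
  refine eq_zero_of_skew_gT_of_skew_scaledRic hc hμ1.ne' hμc.ne hν.ne' hg fun x y => ?_
  have hscale : 2 * (μ - 1) * ν ≠ 0 := by nlinarith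
  have h := hR x y
  rwa [ricF_leviCivita c hμ1.ne' hν.ne', ricF_leviCivita c hμ1.ne' hν.ne', ← add_div,
    div_eq_zero_iff, or_iff_left hscale] at h

/-- for `c > 1` and `1 < μ < c`, the only endomorphism of `𝔤_c`
skew-symmetric with respect to both `g_{μ,ν}` and its Ricci form is `0`. -/
theorem stmt12 (c μ ν : ℝ) (hc : 1 < c) (hμ1 : 1 < μ) (hμc : μ < c) (hν : 0 < ν)
    (nab : V3 → V3 → V3)
    (hK : ∀ X Y Z : V3, 2 * gT μ ν (nab X Y) Z =
      gT μ ν (braC c X Y) Z - gT μ ν (braC c Y Z) X + gT μ ν (braC c Z X) Y) :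
    ∀ A : Module.End ℝ V3,
      (∀ x y : V3, gT μ ν (A x) y + gT μ ν x (A y) = 0) →
      (∀ x y : V3, RicF (braC c) nab (A x) y + RicF (braC c) nab x (A y) = 0) →
      A = 0 :=
  stmt12_general c μ ν hμ1 hμc hν nab hK
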